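/- arXiv:2505.22452 — 2 statements merged into one kernel-verified Lean document; each statement's English description precedes it below -/
import Mathlib

section
/- Let H be a self-adjoint matrix in ℂ^{N×N} with spectral decomposition H = Σ_n E_n P_n, and μ ∈ ℝ with E_n ≠ E_m whenever E_n ≤ μ < E_m. Let P = Σ_{E_n ≤ μ} P_n, P⊥ = Id - P, and let A, B be matrices with A off-diagonal (A = PAP⊥ + P⊥AP). Then lim_{η→0⁺} i·∫_{-∞}^0 η·e^{ηs}·B·e^{isH}·A·e^{-isH} ds = 0. -/
/-!
Write `H = ∑ Eₙ Pₙ`. The map `c ↦ ∑ cₙ Pₙ` is a continuous algebra homomorphism out of `ℂ^K`,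
so it commutes with `exp` and `e^{isH} = ∑ e^{isEₙ} Pₙ`. The integrand therefore splits into the
terms `η e^{(η + i(Eₙ - Eₘ))s} B Pₙ A Pₘ`, whose integrals over `s ≤ 0` are
`η / (η + i(Eₙ - Eₘ)) B Pₙ A Pₘ`. For `Eₙ ≠ Eₘ` the coefficient tends to `0` as `η → 0⁺`; for
`Eₙ = Eₘ` the projections `Pₙ`, `Pₘ` lie on the same side of `P`, so `Pₙ A Pₘ = 0` because `A`
is off-diagonal.
-/

open ContinuousLinearMap MeasureTheory NormedSpace Filter Topology Set

section OffDiagonal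

variable {R : Type*} [Ring R]

theorem mul_mul_eq_zero_of_offDiagonal {P A x y : R} (hA₁ : P * A * P = 0)
    (hA₂ : (1 - P) * A * (1 - P) = 0) (h : x * P = x ∧ P * y = y ∨ x * P = 0 ∧ P * y = 0) :
    x * A * y = 0 := by
  rcases h with ⟨hx, hy⟩ | ⟨hx, hy⟩
  · calc x * A * y = x * P * A * (P * y) := by rw [hx, hy]
      _ = x * (P * A * P) * y := by noncomm_ring
      _ = 0 := by rw [hA₁, mul_zero, zero_mul]
  · have hx' : x * (1 - P) = x := by rw [mul_sub, mul_one, hx, sub_zero]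
    have hy' : (1 - P) * y = y := by rw [sub_mul, one_mul, hy, sub_zero]
    calc x * A * y = x * (1 - P) * A * ((1 - P) * y) := by rw [hx', hy']
      _ = x * ((1 - P) * A * (1 - P)) * y := by noncomm_ring
      _ = 0 := by rw [hA₂, mul_zero, zero_mul]

variable {ι : Type*} {e : ι → R}

theorem OrthogonalIdempotents.sum_mul_of_mem (he : OrthogonalIdempotents e) {i : ι}
    {s : Finset ι} (h : i ∈ s) : (∑ j ∈ s, e j) * e i = e i := by
  classical
  simp [Finset.sum_mul, he.mul_eq, h]

theorem OrthogonalIdempotents.sum_mul_of_notMem (he : OrthogonalIdempotents e) {i : ι}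
    {s : Finset ι} (h : i ∉ s) : (∑ j ∈ s, e j) * e i = 0 := by
  classical
  simp [Finset.sum_mul, he.mul_eq, h]

theorem OrthogonalIdempotents.mul_mul_eq_zero_of_offDiagonal (he : OrthogonalIdempotents e)
    {s : Finset ι} {A : R} (hA₁ : (∑ i ∈ s, e i) * A * ∑ i ∈ s, e i = 0)
    (hA₂ : (1 - ∑ i ∈ s, e i) * A * (1 - ∑ i ∈ s, e i) = 0) {n m : ι} (hnm : n ∈ s ↔ m ∈ s) :
    e n * A * e m = 0 := by
  refine _root_.mul_mul_eq_zero_of_offDiagonal hA₁ hA₂ ?_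
  by_cases hn : n ∈ s
  · exact .inl ⟨he.mul_sum_of_mem hn, he.sum_mul_of_mem (hnm.1 hn)⟩
  · exact .inr ⟨he.mul_sum_of_notMem hn, he.sum_mul_of_notMem (mt hnm.2 hn)⟩

end OffDiagonal

section FunctionalCalculus

variable {𝕜 𝔸 ι : Type*} [RCLike 𝕜] [NormedRing 𝔸] [NormedAlgebra 𝕜 𝔸] [Fintype ι]
  {e : ι → 𝔸}

noncomputable def CompleteOrthogonalIdempotents.sumSMulAlgHom
    (he : CompleteOrthogonalIdempotents e) : (ι → 𝕜) →ₐ[𝕜] 𝔸 :=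
  AlgHom.ofLinearMap (Fintype.linearCombination 𝕜 e)
    (by simp [Fintype.linearCombination_apply, he.complete])
    (fun c d => by
      classical
      simp [Fintype.linearCombination_apply, Finset.sum_mul, Finset.mul_sum, smul_smul, mul_comm,
        he.mul_eq])

theorem CompleteOrthogonalIdempotents.exp_sum_smul [Algebra ℚ 𝔸]
    (he : CompleteOrthogonalIdempotents e) (c : ι → 𝕜) :
    exp (∑ i, c i • e i) = ∑ i, exp (c i) • e i := by
  have := map_exp (he.sumSMulAlgHom (𝕜 := 𝕜)) (LinearMap.continuous_of_finiteDimensional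
    (he.sumSMulAlgHom (𝕜 := 𝕜)).toLinearMap) c
  simpa [CompleteOrthogonalIdempotents.sumSMulAlgHom, Fintype.linearCombination_apply,
    Pi.exp_def] using this.symm

end FunctionalCalculus

theorem integral_Iic_zero_mul_exp {η : ℝ} (hη : 0 < η) (ω : ℝ) :
    ∫ s in Iic (0 : ℝ), (η : ℂ) * Complex.exp ((η + ω * Complex.I) * s) =
      η / (η + ω * Complex.I) := by
  rw [integral_const_mul, integral_exp_mul_complex_Iic (by simpa using hη)]
  simp [div_eq_mul_inv]

theorem tendsto_div_add_mul_I_nhdsGT_zero {ω : ℝ} (hω : ω ≠ 0) :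
    Tendsto (fun η : ℝ => (η : ℂ) / (η + ω * Complex.I)) (𝓝[>] 0) (𝓝 0) := by
  have hcont : ContinuousAt (fun η : ℝ => (η : ℂ) / (η + ω * Complex.I)) 0 := by
    fun_prop (disch := simpa using hω)
  simpa using hcont.tendsto.mono_left nhdsWithin_le_nhds

section Adiabatic

variable {𝔸 ι : Type*} [NormedRing 𝔸] [NormedAlgebra ℂ 𝔸] [Algebra ℚ 𝔸] [Fintype ι] {e : ι → 𝔸}

theorem CompleteOrthogonalIdempotents.exp_smul_sum_smul (he : CompleteOrthogonalIdempotents e)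
    (E : ι → ℝ) (z : ℂ) :
    exp (z • ∑ i, (E i : ℂ) • e i) = ∑ i, Complex.exp (z * E i) • e i := by
  simp_rw [Finset.smul_sum, smul_smul, he.exp_sum_smul, ← Complex.exp_eq_exp_ℂ]

theorem CompleteOrthogonalIdempotents.smul_mul_exp_mul_mul_exp
    (he : CompleteOrthogonalIdempotents e) (E : ι → ℝ) (A B : 𝔸) (η s : ℝ) :
    (η * Real.exp (η * s)) • (B * exp (((s : ℂ) * Complex.I) • ∑ i, (E i : ℂ) • e i) * A *
        exp ((-((s : ℂ) * Complex.I)) • ∑ i, (E i : ℂ) • e i)) =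
      ∑ n, ∑ m, ((η : ℂ) * Complex.exp ((η + ((E n - E m : ℝ) : ℂ) * Complex.I) * s)) •
        (B * e n * A * e m) := by
  rw [he.exp_smul_sum_smul, he.exp_smul_sum_smul]
  simp only [Finset.mul_sum, Finset.sum_mul, smul_mul_assoc, mul_smul_comm, smul_smul,
    Finset.smul_sum]
  rw [Finset.sum_comm]
  refine Finset.sum_congr rfl fun n _ => Finset.sum_congr rfl fun m _ => ?_
  rw [← Complex.coe_smul, smul_smul]
  congr 1
  push_cast
  rw [mul_assoc, ← Complex.exp_add, ← Complex.exp_add]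
  congr 2
  ring

variable [CompleteSpace 𝔸]

theorem CompleteOrthogonalIdempotents.integral_smul_mul_exp_mul_mul_exp
    (he : CompleteOrthogonalIdempotents e) (E : ι → ℝ) (A B : 𝔸) {η : ℝ} (hη : 0 < η) :
    ∫ s in Iic (0 : ℝ), (η * Real.exp (η * s)) •
        (B * exp (((s : ℂ) * Complex.I) • ∑ i, (E i : ℂ) • e i) * A *
          exp ((-((s : ℂ) * Complex.I)) • ∑ i, (E i : ℂ) • e i)) =
      ∑ n, ∑ m, ((η : ℂ) / (η + ((E n - E m : ℝ) : ℂ) * Complex.I)) • (B * e n * A * e m) := by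
  have hint (ω : ℝ) :
      IntegrableOn (fun s : ℝ => (η : ℂ) * Complex.exp ((η + ω * Complex.I) * s)) (Iic 0) :=
    (integrableOn_exp_mul_complex_Iic (by simpa using hη) 0).const_mul _
  simp_rw [he.smul_mul_exp_mul_mul_exp]
  rw [integral_finsetSum _ fun n _ => integrable_finsetSum _ fun m _ => (hint _).smul_const _]
  refine Finset.sum_congr rfl fun n _ => ?_
  rw [integral_finsetSum _ fun m _ => (hint _).smul_const _]
  refine Finset.sum_congr rfl fun m _ => ?_
  rw [integral_smul_const, integral_Iic_zero_mul_exp hη]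

theorem CompleteOrthogonalIdempotents.tendsto_integral_smul_mul_exp_mul_mul_exp
    (he : CompleteOrthogonalIdempotents e) (E : ι → ℝ) {A : 𝔸} (B : 𝔸)
    (hA : ∀ n m, E n = E m → e n * A * e m = 0) {H : 𝔸} (hH : H = ∑ i, (E i : ℂ) • e i) :
    Tendsto (fun η : ℝ => ∫ s in Iic (0 : ℝ), (η * Real.exp (η * s)) •
        (B * exp (((s : ℂ) * Complex.I) • H) * A * exp ((-((s : ℂ) * Complex.I)) • H)))
      (𝓝[>] 0) (𝓝 0) := by
  subst hH
  have hterm (n m : ι) : Tendsto (fun η : ℝ =>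
      ((η : ℂ) / (η + ((E n - E m : ℝ) : ℂ) * Complex.I)) • (B * e n * A * e m))
      (𝓝[>] 0) (𝓝 0) := by
    by_cases h : E n = E m
    · have hzero : B * e n * A * e m = 0 := by
        rw [mul_assoc B, mul_assoc B, hA n m h, mul_zero]
      simp [hzero]
    · simpa using
        (tendsto_div_add_mul_I_nhdsGT_zero (sub_ne_zero.2 h)).smul_const (B * e n * A * e m)
  have hsum := tendsto_finsetSum Finset.univ fun n _ =>
    tendsto_finsetSum Finset.univ fun m _ => hterm n m
  simp only [Finset.sum_const_zero] at hsum
  refine hsum.congr' ?_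
  filter_upwards [self_mem_nhdsWithin] with η hη
  exact (he.integral_smul_mul_exp_mul_mul_exp E A B hη).symm

end Adiabatic

theorem stmt7_general (N K : ℕ)
    (H B A : EuclideanSpace ℂ (Fin N) →L[ℂ] EuclideanSpace ℂ (Fin N))
    (Ev : Fin K → ℝ)
    (Pn : Fin K → (EuclideanSpace ℂ (Fin N) →L[ℂ] EuclideanSpace ℂ (Fin N)))
    (hPorth : ∀ i j, Pn i ∘L Pn j = if i = j then Pn i else 0)
    (hPsum : ∑ i, Pn i = 1)
    (hHdecomp : H = ∑ i, (Ev i : ℂ) • Pn i)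
    (μ : ℝ)
    (P : EuclideanSpace ℂ (Fin N) →L[ℂ] EuclideanSpace ℂ (Fin N))
    (hP : P = ∑ i ∈ Finset.univ.filter (fun i => Ev i ≤ μ), Pn i)
    (hA1 : P ∘L A ∘L P = 0) (hA2 : (1 - P) ∘L A ∘L (1 - P) = 0) :
    Filter.Tendsto (fun η : ℝ =>
        Complex.I • ∫ s in Set.Iic (0:ℝ), (η * Real.exp (η * s)) •
          (B ∘L NormedSpace.exp (((s : ℂ) * Complex.I) • H) ∘L A ∘L
           NormedSpace.exp ((-((s : ℂ) * Complex.I)) • H)))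
      (nhdsWithin 0 (Set.Ioi 0)) (nhds 0) := by
  have hPn : CompleteOrthogonalIdempotents Pn :=
    ⟨OrthogonalIdempotents.iff_mul_eq.2 hPorth, hPsum⟩
  have hA (n m : Fin K) (h : Ev n = Ev m) : Pn n * A * Pn m = 0 := by
    subst hP
    exact hPn.mul_mul_eq_zero_of_offDiagonal (by rw [mul_assoc]; exact hA1)
      (by rw [mul_assoc]; exact hA2) (by simp [h])
  have hlim :=
    (hPn.tendsto_integral_smul_mul_exp_mul_mul_exp Ev B hA hHdecomp).const_smul Complex.I
  rw [smul_zero] at hlim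
  simpa only [← mul_def, mul_assoc] using hlim

/-- Let `H = Σ_n E_n P_n` be a self-adjoint operator on `ℂ^N` with spectral decomposition, and
`μ ∈ ℝ` with `E_n ≠ E_m` whenever `E_n ≤ μ < E_m`.  Let `P = Σ_{E_n ≤ μ} P_n` and let `A` be
off-diagonal with respect to `P`.  Then for any `B`,
`lim_{η→0⁺} i ∫_{-∞}^0 η e^{ηs} B e^{isH} A e^{-isH} ds = 0`. -/
theorem stmt7 (N K : ℕ)
    (H B A : EuclideanSpace ℂ (Fin N) →L[ℂ] EuclideanSpace ℂ (Fin N))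
    (hH : IsSelfAdjoint H)
    (Ev : Fin K → ℝ)
    (Pn : Fin K → (EuclideanSpace ℂ (Fin N) →L[ℂ] EuclideanSpace ℂ (Fin N)))
    (hPsa : ∀ i, IsSelfAdjoint (Pn i))
    (hPorth : ∀ i j, Pn i ∘L Pn j = if i = j then Pn i else 0)
    (hPsum : ∑ i, Pn i = 1)
    (hHdecomp : H = ∑ i, (Ev i : ℂ) • Pn i)
    (μ : ℝ)
    (hdist : ∀ i j, Ev i ≤ μ → μ < Ev j → Ev i ≠ Ev j)
    (P : EuclideanSpace ℂ (Fin N) →L[ℂ] EuclideanSpace ℂ (Fin N))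
    (hP : P = ∑ i ∈ Finset.univ.filter (fun i => Ev i ≤ μ), Pn i)
    (hA1 : P ∘L A ∘L P = 0) (hA2 : (1 - P) ∘L A ∘L (1 - P) = 0) :
    Filter.Tendsto (fun η : ℝ =>
        Complex.I • ∫ s in Set.Iic (0:ℝ), (η * Real.exp (η * s)) •
          (B ∘L NormedSpace.exp (((s : ℂ) * Complex.I) • H) ∘L A ∘L
           NormedSpace.exp ((-((s : ℂ) * Complex.I)) • H)))
      (nhdsWithin 0 (Set.Ioi 0)) (nhds 0) :=
  stmt7_general N K H B A Ev Pn hPorth hPsum hHdecomp μ P hP hA1 hA2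
end

section
/- Let λ_SO ≠ 0, w, λ_R ∈ ℝ, and let E₁ ≤ E₂ ≤ E₃ ≤ E₄ be the ordered eigenvalues of the 4×4 matrix with eigenvalue multiset {λ_SO + √(w²+λ_R²), λ_SO − √(w²+λ_R²), −λ_SO + |w|, −λ_SO − |w|}. Define Δ := E₃ − E₂. Then (assuming λ_SO > 0 WLOG): Δ = |2λ_SO − |w| − √(w²+λ_R²)| when |λ_R| ≤ 2√(λ_SO² + |w·λ_SO|), and Δ = 2|w| when |λ_R| ≥ 2√(λ_SO² + |w·λ_SO|). Moreover, Δ = 0 if and only if w = ±max{|λ_SO| − λ_R²/(4|λ_SO|), 0}. -/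
/-!
Write `a = λ_SO`, `u = |w|` and `s = √(w² + λ_R²) ≥ u`. The largest eigenvalue is always `a + s`
and `-a - u ≤ -a + u`, so only the position of `a - s` varies: the two middle eigenvalues are
`{-a + u, a - s}` when `s ≤ 2a + u`, giving `Δ = |2a - u - s|`, and `{-a - u, -a + u}` otherwise,
giving `Δ = 2u`. Squaring shows `s ≤ 2a + u ↔ λ_R² ≤ 4(a² + ua)`, which is the threshold on `|λ_R|`.
The gap closes exactly when `s = 2a - u`, i.e. `λ_R² = 4a(a - u)`, or when `u = 0` and `s ≥ 2a`;
together these say `u = max (a - λ_R²/(4a)) 0`.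
-/

theorem eq_of_sorted_of_multiset_eq {α : Type*} [LinearOrder α] {a b c d a' b' c' d' : α}
    (hab : a ≤ b) (hbc : b ≤ c) (hcd : c ≤ d) (hab' : a' ≤ b') (hbc' : b' ≤ c') (hcd' : c' ≤ d')
    (h : ({a, b, c, d} : Multiset α) = {a', b', c', d'}) :
    a = a' ∧ b = b' ∧ c = c' ∧ d = d' := by
  have sorted {x y z t : α} (hxy : x ≤ y) (hyz : y ≤ z) (hzt : z ≤ t) :
      [x, y, z, t].Pairwise (· ≤ ·) := by
    simp only [List.pairwise_cons, List.mem_cons, List.not_mem_nil]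
    grind
  simpa using
    (Multiset.coe_eq_coe.mp h).eq_of_pairwise' (sorted hab hbc hcd) (sorted hab' hbc' hcd')

section MiddleGap

variable {a u s E₁ E₂ E₃ E₄ : ℝ} (ha : 0 ≤ a) (hu : 0 ≤ u) (hus : u ≤ s)
  (h₁₂ : E₁ ≤ E₂) (h₂₃ : E₂ ≤ E₃) (h₃₄ : E₃ ≤ E₄)
  (hE : ({E₁, E₂, E₃, E₄} : Multiset ℝ) = {a + s, a - s, -a + u, -a - u})
include ha hu hus h₁₂ h₂₃ h₃₄ hE

theorem middle_gap_eq_abs_of_le (hs : s ≤ 2 * a + u) : E₃ - E₂ = |2 * a - u - s| := by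
  rcases le_total s (2 * a - u) with hlow | hhigh
  · obtain ⟨-, rfl, rfl, -⟩ := eq_of_sorted_of_multiset_eq h₁₂ h₂₃ h₃₄
      (by linarith : -a - u ≤ -a + u) (by linarith : -a + u ≤ a - s) (by linarith : a - s ≤ a + s)
      (hE.trans (by simp only [Multiset.insert_eq_cons, ← Multiset.cons_zero, Multiset.cons_swap]))
    rw [abs_of_nonneg (by linarith)]
    ring
  · obtain ⟨-, rfl, rfl, -⟩ := eq_of_sorted_of_multiset_eq h₁₂ h₂₃ h₃₄
      (by linarith : -a - u ≤ a - s) (by linarith : a - s ≤ -a + u) (by linarith : -a + u ≤ a + s)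
      (hE.trans (by simp only [Multiset.insert_eq_cons, ← Multiset.cons_zero, Multiset.cons_swap]))
    rw [abs_of_nonpos (by linarith)]
    ring

theorem middle_gap_eq_of_le (hs : 2 * a + u ≤ s) : E₃ - E₂ = 2 * u := by
  obtain ⟨-, rfl, rfl, -⟩ := eq_of_sorted_of_multiset_eq h₁₂ h₂₃ h₃₄
    (by linarith : a - s ≤ -a - u) (by linarith : -a - u ≤ -a + u) (by linarith : -a + u ≤ a + s)
    (hE.trans (by simp only [Multiset.insert_eq_cons, ← Multiset.cons_zero, Multiset.cons_swap]))
  ring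

theorem middle_gap_eq_zero_iff : E₃ - E₂ = 0 ↔ s = 2 * a - u ∨ (u = 0 ∧ 2 * a ≤ s) := by
  rcases le_total s (2 * a + u) with hs | hs
  · rw [middle_gap_eq_abs_of_le ha hu hus h₁₂ h₂₃ h₃₄ hE hs, abs_eq_zero]
    constructor
    · intro h; left; linarith
    · rintro (h | ⟨rfl, h⟩) <;> linarith
  · rw [middle_gap_eq_of_le ha hu hus h₁₂ h₂₃ h₃₄ hE hs]
    constructor
    · intro h; right; constructor <;> linarith
    · rintro (h | ⟨rfl, -⟩) <;> linarith

end MiddleGap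

section KaneMele

variable {a : ℝ} (w lamR : ℝ)

theorem sq_sqrt_sub_sq_eq (ha : 0 ≤ a) :
    √(w ^ 2 + lamR ^ 2) ^ 2 - (2 * a + |w|) ^ 2 = |lamR| ^ 2 - (2 * √(a ^ 2 + |w * a|)) ^ 2 := by
  rw [mul_pow, Real.sq_sqrt (by positivity), Real.sq_sqrt (by positivity), sq_abs,
    abs_mul, abs_of_nonneg ha, ← sq_abs w]
  ring

theorem sqrt_le_iff_abs_le_two_mul_sqrt (ha : 0 ≤ a) :
    √(w ^ 2 + lamR ^ 2) ≤ 2 * a + |w| ↔ |lamR| ≤ 2 * √(a ^ 2 + |w * a|) := by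
  rw [← sq_le_sq₀ (Real.sqrt_nonneg _) (by positivity),
    ← sq_le_sq₀ (abs_nonneg lamR) (by positivity), ← sub_nonpos,
    sq_sqrt_sub_sq_eq w lamR ha, sub_nonpos]

theorem le_sqrt_iff_two_mul_sqrt_le_abs (ha : 0 ≤ a) :
    2 * a + |w| ≤ √(w ^ 2 + lamR ^ 2) ↔ 2 * √(a ^ 2 + |w * a|) ≤ |lamR| := by
  rw [← sq_le_sq₀ (by positivity) (Real.sqrt_nonneg _),
    ← sq_le_sq₀ (by positivity) (abs_nonneg lamR), ← sub_nonneg,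
    sq_sqrt_sub_sq_eq w lamR ha, sub_nonneg]

theorem sqrt_eq_two_mul_sub_abs_iff (ha : 0 < a) :
    √(w ^ 2 + lamR ^ 2) = 2 * a - |w| ↔ |w| = a - lamR ^ 2 / (4 * a) := by
  have hw := sq_abs w
  constructor
  · intro h
    have hsq := Real.sq_sqrt (by positivity : 0 ≤ w ^ 2 + lamR ^ 2)
    rw [h] at hsq
    field_simp
    nlinarith
  · intro h
    have hlamR : lamR ^ 2 = 4 * a * (a - |w|) := by
      rw [h]; field_simp; ring
    have hwa : |w| ≤ a := by nlinarith [sq_nonneg lamR]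
    rw [Real.sqrt_eq_iff_eq_sq (by positivity) (by linarith)]
    nlinarith

theorem abs_eq_zero_and_two_mul_le_sqrt_iff (ha : 0 < a) :
    |w| = 0 ∧ 2 * a ≤ √(w ^ 2 + lamR ^ 2) ↔ w = 0 ∧ a - lamR ^ 2 / (4 * a) ≤ 0 := by
  rw [abs_eq_zero, sub_nonpos, le_div_iff₀ (by positivity)]
  refine and_congr_right fun hw => ?_
  rw [hw, Real.le_sqrt (by positivity) (by positivity)]
  constructor <;> intro h <;> nlinarith

theorem sqrt_eq_or_iff_abs_eq_max (ha : 0 < a) :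
    (√(w ^ 2 + lamR ^ 2) = 2 * a - |w| ∨ (|w| = 0 ∧ 2 * a ≤ √(w ^ 2 + lamR ^ 2))) ↔
      |w| = max (a - lamR ^ 2 / (4 * a)) 0 := by
  rw [sqrt_eq_two_mul_sub_abs_iff w lamR ha, abs_eq_zero_and_two_mul_le_sqrt_iff w lamR ha,
    @eq_comm _ |w| (max _ _), max_eq_iff]
  constructor
  · rintro (h | ⟨rfl, h⟩)
    · exact Or.inl ⟨h.symm, h ▸ abs_nonneg w⟩
    · exact Or.inr ⟨abs_zero.symm, h⟩
  · rintro (⟨h, -⟩ | ⟨h, h'⟩)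
    · exact Or.inl h.symm
    · exact Or.inr ⟨abs_eq_zero.mp h.symm, h'⟩

end KaneMele

/-- Gap formula for the extended Kane–Mele model at the Dirac point.  Let `E₁ ≤ E₂ ≤ E₃ ≤ E₄`
be the ordered eigenvalues, i.e. the multiset
`{λ_SO + √(w²+λ_R²), λ_SO − √(w²+λ_R²), −λ_SO + |w|, −λ_SO − |w|}` (with `λ_SO > 0` WLOG).
Then `Δ := E₃ − E₂` equals `|2λ_SO − |w| − √(w²+λ_R²)|` when `|λ_R| ≤ 2√(λ_SO² + |w·λ_SO|)`,
equals `2|w|` when `|λ_R| ≥ 2√(λ_SO² + |w·λ_SO|)`, and `Δ = 0` iff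
`w = ±max{|λ_SO| − λ_R²/(4|λ_SO|), 0}`. -/
theorem stmt10 (lamSO w lamR : ℝ) (hSO : 0 < lamSO)
    (E1 E2 E3 E4 : ℝ) (h12 : E1 ≤ E2) (h23 : E2 ≤ E3) (h34 : E3 ≤ E4)
    (hmult : ({E1, E2, E3, E4} : Multiset ℝ) =
      {lamSO + Real.sqrt (w ^ 2 + lamR ^ 2), lamSO - Real.sqrt (w ^ 2 + lamR ^ 2),
        -lamSO + |w|, -lamSO - |w|}) :
    (|lamR| ≤ 2 * Real.sqrt (lamSO ^ 2 + |w * lamSO|) →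
        E3 - E2 = |2 * lamSO - |w| - Real.sqrt (w ^ 2 + lamR ^ 2)|) ∧
    (2 * Real.sqrt (lamSO ^ 2 + |w * lamSO|) ≤ |lamR| → E3 - E2 = 2 * |w|) ∧
    (E3 - E2 = 0 ↔
        w = max (|lamSO| - lamR ^ 2 / (4 * |lamSO|)) 0 ∨
        w = -max (|lamSO| - lamR ^ 2 / (4 * |lamSO|)) 0) := by
  have hu : |w| ≤ √(w ^ 2 + lamR ^ 2) :=
    Real.abs_le_sqrt (le_add_of_nonneg_right (sq_nonneg lamR))
  refine ⟨fun h => middle_gap_eq_abs_of_le hSO.le (abs_nonneg w) hu h12 h23 h34 hmult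
      ((sqrt_le_iff_abs_le_two_mul_sqrt w lamR hSO.le).mpr h),
    fun h => middle_gap_eq_of_le hSO.le (abs_nonneg w) hu h12 h23 h34 hmult
      ((le_sqrt_iff_two_mul_sqrt_le_abs w lamR hSO.le).mpr h), ?_⟩
  rw [middle_gap_eq_zero_iff hSO.le (abs_nonneg w) hu h12 h23 h34 hmult,
    sqrt_eq_or_iff_abs_eq_max w lamR hSO, abs_of_pos hSO, abs_eq (le_max_right _ _)]
end
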